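/- Let C be a finite set of vectors in Fin k → Bool. There exist U : Fin k → Set ℝ with each U i open and convex such that the code of U over all of ℝ equals C, if and only if there exist U : Fin k → Set ℝ with each U i closed and convex such that the code of U over all of ℝ equals C. -/
import Mathlib


/- The codeword of a point `p` with respect to a family `U` of subsets of `ℝ`. -/
open Classical in
noncomputable def codeword {k : ℕ} (U : Fin k → Set ℝ) (p : ℝ) : Fin k → Bool :=
  fun i => decide (p ∈ U i)

/-- The code of `U` over a set `S` of sensors. -/
def code {k : ℕ} (U : Fin k → Set ℝ) (S : Set ℝ) : Set (Fin k → Bool) :=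
  codeword U '' S

open Set



private lemma gen_a (x : EReal) (p ε : ℝ) (hε : 0 < ε)
    (hx : ∀ r : ℝ, x = ↑r → ε ≤ |p - r|) : x < ↑p ↔ x + ↑ε ≤ ↑p := by
  induction x using EReal.rec with
  | bot => simp
  | top => simp [(EReal.coe_lt_top p).not_ge, (EReal.coe_lt_top p).le]
  | coe r =>
    have h := hx r rfl
    norm_cast
    rcases abs_cases (p - r) with ⟨h1, _⟩ | ⟨h1, _⟩ <;> rw [h1] at h <;>
      constructor <;> intro h2 <;> linarith

private lemma gen_b (x : EReal) (p ε : ℝ) (hε : 0 < ε)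
    (hx : ∀ r : ℝ, x = ↑r → ε ≤ |p - r|) : ↑p < x ↔ (p : EReal) ≤ x - ↑ε := by
  induction x using EReal.rec with
  | bot => simp
  | top => simp [EReal.coe_lt_top, (EReal.coe_lt_top p).le]
  | coe r =>
    have h := hx r rfl
    rw [show (r : EReal) - ↑ε = ((r - ε : ℝ) : EReal) by norm_cast]
    norm_cast
    rcases abs_cases (p - r) with ⟨h1, _⟩ | ⟨h1, _⟩ <;> rw [h1] at h <;>
      constructor <;> intro h2 <;> linarith

private lemma near_a (x : EReal) (p e ε : ℝ) (hε : 0 < ε) (hpe : |p - e| < ε)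
    (hx : ∀ r : ℝ, x = ↑r → r = e ∨ 2*ε ≤ |r - e|) : x + ↑ε ≤ ↑p ↔ x < ↑e := by
  induction x using EReal.rec with
  | bot => simp
  | top => simp [(EReal.coe_lt_top e).not_ge, (EReal.coe_lt_top p).not_ge]
  | coe r =>
    have h := hx r rfl
    norm_cast
    rcases abs_cases (p - e) with ⟨h1, _⟩ | ⟨h1, _⟩ <;> rw [h1] at hpe <;>
    · rcases h with rfl | h
      · constructor <;> intro h2 <;> linarith
      · rcases abs_cases (r - e) with ⟨h3, _⟩ | ⟨h3, _⟩ <;> rw [h3] at h <;>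
          constructor <;> intro h2 <;> linarith

private lemma near_b (x : EReal) (p e ε : ℝ) (hε : 0 < ε) (hpe : |p - e| < ε)
    (hx : ∀ r : ℝ, x = ↑r → r = e ∨ 2*ε ≤ |r - e|) : (p:EReal) ≤ x - ↑ε ↔ ↑e < x := by
  induction x using EReal.rec with
  | bot => simp
  | top => simp [EReal.coe_lt_top, (EReal.coe_lt_top p).le]
  | coe r =>
    have h := hx r rfl
    rw [show (r : EReal) - ↑ε = ((r - ε : ℝ) : EReal) by norm_cast]
    norm_cast
    rcases abs_cases (p - e) with ⟨h1, _⟩ | ⟨h1, _⟩ <;> rw [h1] at hpe <;>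
    · rcases h with rfl | h
      · constructor <;> intro h2 <;> linarith
      · rcases abs_cases (r - e) with ⟨h3, _⟩ | ⟨h3, _⟩ <;> rw [h3] at h <;>
          constructor <;> intro h2 <;> linarith


private lemma shift_a (x : EReal) (p e q ε : ℝ) (hε : 0 < ε)
    (hside : (p < e ∧ q < e ∧ e - ε ≤ p ∧ e - ε ≤ q) ∨
             (e < p ∧ e < q ∧ p ≤ e + ε ∧ q ≤ e + ε))
    (hx : ∀ r : ℝ, x = ↑r → r = e ∨ 2*ε ≤ |r - e|) : x < ↑p ↔ x < ↑q := by
  induction x using EReal.rec with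
  | bot => simp
  | top => simp
  | coe r =>
    have h := hx r rfl
    norm_cast
    rcases hside with ⟨s1, s2, s3, s4⟩ | ⟨s1, s2, s3, s4⟩ <;>
    · rcases h with rfl | h
      · constructor <;> intro h3 <;> linarith
      · rcases abs_cases (r - e) with ⟨h4, _⟩ | ⟨h4, _⟩ <;> rw [h4] at h <;>
          constructor <;> intro h3 <;> linarith

private lemma shift_b (x : EReal) (p e q ε : ℝ) (hε : 0 < ε)
    (hside : (p < e ∧ q < e ∧ e - ε ≤ p ∧ e - ε ≤ q) ∨
             (e < p ∧ e < q ∧ p ≤ e + ε ∧ q ≤ e + ε))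
    (hx : ∀ r : ℝ, x = ↑r → r = e ∨ 2*ε ≤ |r - e|) : ↑p < x ↔ ↑q < x := by
  induction x using EReal.rec with
  | bot => simp
  | top => simp [EReal.coe_lt_top]
  | coe r =>
    have h := hx r rfl
    norm_cast
    rcases hside with ⟨s1, s2, s3, s4⟩ | ⟨s1, s2, s3, s4⟩ <;>
    · rcases h with rfl | h
      · constructor <;> intro h3 <;> linarith
      · rcases abs_cases (r - e) with ⟨h4, _⟩ | ⟨h4, _⟩ <;> rw [h4] at h <;>
          constructor <;> intro h3 <;> linarith
private def Ept {k : ℕ} (a b : Fin k → EReal) (r : ℝ) : Prop :=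
  (∃ i, a i = ↑r) ∨ (∃ i, b i = ↑r)

private lemma core {k : ℕ} (a b : Fin k → EReal) (ε : ℝ) (hε : 0 < ε)
    (gap : ∀ r s : ℝ, Ept a b r → Ept a b s → r ≠ s → 2*ε ≤ |r - s|) :
    code (fun i => {x : ℝ | a i < ↑x ∧ ↑x < b i}) Set.univ =
      code (fun i => {x : ℝ | a i + ↑ε ≤ ↑x ∧ ↑x ≤ b i - ↑ε}) Set.univ := by
  have gapA : ∀ (i : Fin k) (e : ℝ), Ept a b e → ∀ r : ℝ, a i = ↑r → r = e ∨ 2*ε ≤ |r - e| := by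
    intro i e he r hr
    by_cases h : r = e
    · exact Or.inl h
    · exact Or.inr (gap r e (Or.inl ⟨i, hr⟩) he h)
  have gapB : ∀ (i : Fin k) (e : ℝ), Ept a b e → ∀ r : ℝ, b i = ↑r → r = e ∨ 2*ε ≤ |r - e| := by
    intro i e he r hr
    by_cases h : r = e
    · exact Or.inl h
    · exact Or.inr (gap r e (Or.inr ⟨i, hr⟩) he h)
  have key_gen : ∀ p : ℝ, (∀ r : ℝ, Ept a b r → ε ≤ |p - r|) → ∀ i,
      ((a i < (p:EReal) ∧ (p:EReal) < b i) ↔ (a i + ↑ε ≤ (p:EReal) ∧ (p:EReal) ≤ b i - ↑ε)) := by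
    intro p hp i
    exact and_congr
      (gen_a (a i) p ε hε fun r hr => hp r (Or.inl ⟨i, hr⟩))
      (gen_b (b i) p ε hε fun r hr => hp r (Or.inr ⟨i, hr⟩))
  have key_near : ∀ p e : ℝ, Ept a b e → |p - e| < ε → ∀ i,
      ((a i + ↑ε ≤ (p:EReal) ∧ (p:EReal) ≤ b i - ↑ε) ↔ (a i < (e:EReal) ∧ (e:EReal) < b i)) := by
    intro p e he hpe i
    exact and_congr
      (near_a (a i) p e ε hε hpe (gapA i e he))
      (near_b (b i) p e ε hε hpe (gapB i e he))
  have hgenleft : ∀ e : ℝ, Ept a b e → ∀ r : ℝ, Ept a b r → ε ≤ |(e - ε) - r| := by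
    intro e he r hr
    by_cases h : r = e
    · rw [h, show e - ε - e = -ε by ring, abs_neg, abs_of_pos hε]
    · have := gap r e hr he h
      rcases abs_cases (r - e) with ⟨h1, _⟩ | ⟨h1, _⟩ <;> rw [h1] at this <;>
        rcases abs_cases (e - ε - r) with ⟨h2, _⟩ | ⟨h2, _⟩ <;> rw [h2] <;> linarith
  have hgenright : ∀ e : ℝ, Ept a b e → ∀ r : ℝ, Ept a b r → ε ≤ |(e + ε) - r| := by
    intro e he r hr
    by_cases h : r = e
    · rw [h, show e + ε - e = ε by ring, abs_of_pos hε]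
    · have := gap r e hr he h
      rcases abs_cases (r - e) with ⟨h1, _⟩ | ⟨h1, _⟩ <;> rw [h1] at this <;>
        rcases abs_cases (e + ε - r) with ⟨h2, _⟩ | ⟨h2, _⟩ <;> rw [h2] <;> linarith
  have hw : ∀ (U : Fin k → Set ℝ), code U Set.univ = Set.range (codeword U) := by
    intro U; rw [code, Set.image_univ]
  rw [hw, hw]
  ext w
  simp only [Set.mem_range]
  constructor
  · rintro ⟨p, rfl⟩
    by_cases hgen : ∀ r : ℝ, Ept a b r → ε ≤ |p - r|
    · exact ⟨p, funext fun i => decide_eq_decide.mpr ((key_gen p hgen i).symm)⟩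
    · push_neg at hgen
      obtain ⟨e, he, hpe⟩ := hgen
      rcases lt_trichotomy p e with hlt | rfl | hgt
      · refine ⟨e - ε, funext fun i => decide_eq_decide.mpr ?_⟩
        have habs : e - p < ε := by
          rcases abs_cases (p - e) with ⟨h1, _⟩ | ⟨h1, _⟩ <;> rw [h1] at hpe <;> linarith
        have hs : (p < e ∧ (e - ε) < e ∧ e - ε ≤ p ∧ e - ε ≤ e - ε) ∨
            (e < p ∧ e < (e - ε) ∧ p ≤ e + ε ∧ (e - ε) ≤ e + ε) :=
          Or.inl ⟨hlt, by linarith, by linarith, le_refl _⟩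
        have hstep : (a i < (p:EReal) ∧ (p:EReal) < b i) ↔
            (a i < ((e - ε : ℝ):EReal) ∧ ((e - ε : ℝ):EReal) < b i) :=
          and_congr
            (shift_a (a i) p e (e - ε) ε hε hs (gapA i e he))
            (shift_b (b i) p e (e - ε) ε hε hs (gapB i e he))
        exact ((key_gen (e - ε) (hgenleft e he) i).symm.trans hstep.symm)
      · exact ⟨p, funext fun i => decide_eq_decide.mpr
          (key_near p p he (by simpa using hε) i)⟩
      · refine ⟨e + ε, funext fun i => decide_eq_decide.mpr ?_⟩
        have habs : p - e < ε := by
          rcases abs_cases (p - e) with ⟨h1, _⟩ | ⟨h1, _⟩ <;> rw [h1] at hpe <;> linarith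
        have hs : (p < e ∧ (e + ε) < e ∧ e - ε ≤ p ∧ e - ε ≤ e + ε) ∨
            (e < p ∧ e < (e + ε) ∧ p ≤ e + ε ∧ (e + ε) ≤ e + ε) :=
          Or.inr ⟨hgt, by linarith, by linarith, le_refl _⟩
        have hstep : (a i < (p:EReal) ∧ (p:EReal) < b i) ↔
            (a i < ((e + ε : ℝ):EReal) ∧ ((e + ε : ℝ):EReal) < b i) :=
          and_congr
            (shift_a (a i) p e (e + ε) ε hε hs (gapA i e he))
            (shift_b (b i) p e (e + ε) ε hε hs (gapB i e he))
        exact ((key_gen (e + ε) (hgenright e he) i).symm.trans hstep.symm)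
  · rintro ⟨p, rfl⟩
    by_cases hgen : ∀ r : ℝ, Ept a b r → ε ≤ |p - r|
    · exact ⟨p, funext fun i => decide_eq_decide.mpr (key_gen p hgen i)⟩
    · push_neg at hgen
      obtain ⟨e, he, hpe⟩ := hgen
      exact ⟨e, funext fun i => decide_eq_decide.mpr ((key_near p e he hpe i).symm)⟩
private lemma open_rep {s : Set ℝ} (ho : IsOpen s) (hc : Convex ℝ s) :
    ∃ a b : EReal, s = {x : ℝ | a < ↑x ∧ ↑x < b} := by
  rcases eq_empty_or_nonempty s with rfl | hne
  · exact ⟨⊤, ⊥, by ext x; simp [(EReal.coe_lt_top x).not_gt]⟩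
  have hio := ho.interior_eq
  rcases hc.isPreconnected.mem_intervals with h|h|h|h|h|h|h|h|h|h
  · obtain ⟨A, B, rfl⟩ : ∃ A B : ℝ, s = Icc A B := ⟨_, _, h⟩
    have hab := nonempty_Icc.mp hne
    have h1 : A ∈ Ioo A B := by rw [← interior_Icc, hio]; exact left_mem_Icc.mpr hab
    simp at h1
  · obtain ⟨A, B, rfl⟩ : ∃ A B : ℝ, s = Ico A B := ⟨_, _, h⟩
    have hab := nonempty_Ico.mp hne
    have h1 : A ∈ Ioo A B := by rw [← interior_Ico, hio]; exact left_mem_Ico.mpr hab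
    simp at h1
  · obtain ⟨A, B, rfl⟩ : ∃ A B : ℝ, s = Ioc A B := ⟨_, _, h⟩
    have hab := nonempty_Ioc.mp hne
    have h1 : B ∈ Ioo A B := by rw [← interior_Ioc, hio]; exact right_mem_Ioc.mpr hab
    simp at h1
  · obtain ⟨A, B, rfl⟩ : ∃ A B : ℝ, s = Ioo A B := ⟨_, _, h⟩
    exact ⟨↑A, ↑B, by ext x; simp [EReal.coe_lt_coe_iff]⟩
  · obtain ⟨A, rfl⟩ : ∃ A : ℝ, s = Ici A := ⟨_, h⟩
    have h1 : A ∈ Ioi A := by rw [← interior_Ici, hio]; exact self_mem_Ici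
    simp at h1
  · obtain ⟨A, rfl⟩ : ∃ A : ℝ, s = Ioi A := ⟨_, h⟩
    exact ⟨↑A, ⊤, by ext x; simp [EReal.coe_lt_coe_iff, EReal.coe_lt_top]⟩
  · obtain ⟨B, rfl⟩ : ∃ B : ℝ, s = Iic B := ⟨_, h⟩
    have h1 : B ∈ Iio B := by rw [← interior_Iic, hio]; exact self_mem_Iic
    simp at h1
  · obtain ⟨B, rfl⟩ : ∃ B : ℝ, s = Iio B := ⟨_, h⟩
    exact ⟨⊥, ↑B, by ext x; simp [EReal.coe_lt_coe_iff, EReal.bot_lt_coe]⟩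
  · exact ⟨⊥, ⊤, by rw [h]; ext x; simp [EReal.bot_lt_coe, EReal.coe_lt_top]⟩
  · exact absurd h hne.ne_empty

private lemma closed_rep {s : Set ℝ} (ho : IsClosed s) (hc : Convex ℝ s) :
    ∃ c d : EReal, s = {x : ℝ | c ≤ ↑x ∧ ↑x ≤ d} := by
  rcases eq_empty_or_nonempty s with rfl | hne
  · refine ⟨⊤, ⊥, ?_⟩
    ext x
    simp only [mem_empty_iff_false, mem_setOf_eq, false_iff, not_and]
    intro hx
    exact absurd hx (EReal.coe_lt_top x).not_ge
  have hcl := ho.closure_eq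
  rcases hc.isPreconnected.mem_intervals with h|h|h|h|h|h|h|h|h|h
  · obtain ⟨A, B, rfl⟩ : ∃ A B : ℝ, s = Icc A B := ⟨_, _, h⟩
    exact ⟨↑A, ↑B, by ext x; simp [EReal.coe_le_coe_iff]⟩
  · obtain ⟨A, B, rfl⟩ : ∃ A B : ℝ, s = Ico A B := ⟨_, _, h⟩
    have hab := nonempty_Ico.mp hne
    have h1 : B ∈ Ico A B := by rw [← hcl, closure_Ico hab.ne]; exact right_mem_Icc.mpr hab.le
    simp at h1
  · obtain ⟨A, B, rfl⟩ : ∃ A B : ℝ, s = Ioc A B := ⟨_, _, h⟩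
    have hab := nonempty_Ioc.mp hne
    have h1 : A ∈ Ioc A B := by rw [← hcl, closure_Ioc hab.ne]; exact left_mem_Icc.mpr hab.le
    simp at h1
  · obtain ⟨A, B, rfl⟩ : ∃ A B : ℝ, s = Ioo A B := ⟨_, _, h⟩
    have hab := nonempty_Ioo.mp hne
    have h1 : A ∈ Ioo A B := by rw [← hcl, closure_Ioo hab.ne]; exact left_mem_Icc.mpr hab.le
    simp at h1
  · obtain ⟨A, rfl⟩ : ∃ A : ℝ, s = Ici A := ⟨_, h⟩
    exact ⟨↑A, ⊤, by ext x; simp [EReal.coe_le_coe_iff, (EReal.coe_lt_top x).le]⟩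
  · obtain ⟨A, rfl⟩ : ∃ A : ℝ, s = Ioi A := ⟨_, h⟩
    have h1 : A ∈ Ioi A := by rw [← hcl, closure_Ioi]; exact self_mem_Ici
    simp at h1
  · obtain ⟨B, rfl⟩ : ∃ B : ℝ, s = Iic B := ⟨_, h⟩
    exact ⟨⊥, ↑B, by ext x; simp [EReal.coe_le_coe_iff, (EReal.bot_lt_coe x).le]⟩
  · obtain ⟨B, rfl⟩ : ∃ B : ℝ, s = Iio B := ⟨_, h⟩
    have h1 : B ∈ Iio B := by rw [← hcl, closure_Iio]; exact self_mem_Iic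
    simp at h1
  · exact ⟨⊥, ⊤, by ext x; simp [h, (EReal.bot_lt_coe x).le, (EReal.coe_lt_top x).le]⟩
  · exact absurd h hne.ne_empty

private lemma finset_eps (D : Finset ℝ) (hpos : ∀ x ∈ D, 0 < x) :
    ∃ ε : ℝ, 0 < ε ∧ ∀ x ∈ D, 2*ε ≤ x := by
  by_cases hne : D.Nonempty
  · refine ⟨D.min' hne / 2, by linarith [hpos _ (D.min'_mem hne)], fun x hx => ?_⟩
    linarith [D.min'_le x hx]
  · rw [Finset.not_nonempty_iff_eq_empty] at hne
    exact ⟨1, one_pos, fun x hx => by simp [hne] at hx⟩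

private lemma exists_eps {k : ℕ} (a b : Fin k → EReal) :
    ∃ ε : ℝ, 0 < ε ∧ ∀ r s : ℝ, Ept a b r → Ept a b s → r ≠ s → 2*ε ≤ |r - s| := by
  have hfin : {r : ℝ | Ept a b r}.Finite := by
    have hsub : {r : ℝ | Ept a b r} ⊆ Real.toEReal ⁻¹' (Set.range a ∪ Set.range b) := by
      intro r hr
      rcases hr with ⟨i, hi⟩ | ⟨i, hi⟩
      · exact Or.inl ⟨i, hi⟩
      · exact Or.inr ⟨i, hi⟩
    refine Set.Finite.subset (Set.Finite.preimage ?_ ?_) hsub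
    · exact Set.injOn_of_injective EReal.coe_injective
    · exact (Set.finite_range a).union (Set.finite_range b)
  classical
  obtain ⟨ε, hε, hD⟩ := finset_eps
    (((hfin.toFinset ×ˢ hfin.toFinset).filter fun p => p.1 ≠ p.2).image fun p => |p.1 - p.2|)
    (by
      intro x hx
      simp only [Finset.mem_image, Finset.mem_filter, Finset.mem_product] at hx
      obtain ⟨⟨u, v⟩, ⟨_, huv⟩, hval⟩ := hx
      exact hval ▸ abs_pos.mpr (sub_ne_zero.mpr huv))
  refine ⟨ε, hε, fun r s hr hs hrs => ?_⟩
  refine hD _ ?_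
  refine Finset.mem_image.mpr ⟨(r, s), ?_, rfl⟩
  exact Finset.mem_filter.mpr ⟨Finset.mem_product.mpr
    ⟨hfin.mem_toFinset.mpr hr, hfin.mem_toFinset.mpr hs⟩, hrs⟩
private lemma er_sub_add (x : EReal) (t : ℝ) : x - ↑t + ↑t = x := by
  induction x using EReal.rec with
  | bot => simp
  | coe r => norm_cast; ring
  | top => simp

private lemma er_add_sub (x : EReal) (t : ℝ) : x + ↑t - ↑t = x := by
  induction x using EReal.rec with
  | bot => simp
  | coe r => norm_cast; ring
  | top => simp

private lemma gapshift (ε r0 s0 u v : ℝ) (hε : 0 < ε) (hg : 2*ε ≤ |r0 - s0|)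
    (hu : u = r0 - ε/2 ∨ u = r0 + ε/2) (hv : v = s0 - ε/2 ∨ v = s0 + ε/2) :
    2*(ε/2) ≤ |u - v| := by
  have h1 : |r0 - u| = ε/2 := by
    rcases hu with rfl | rfl
    · rw [show r0 - (r0 - ε/2) = ε/2 by ring, abs_of_pos (by linarith)]
    · rw [show r0 - (r0 + ε/2) = -(ε/2) by ring, abs_neg, abs_of_pos (by linarith)]
  have h2 : |v - s0| = ε/2 := by
    rcases hv with rfl | rfl
    · rw [show s0 - ε/2 - s0 = -(ε/2) by ring, abs_neg, abs_of_pos (by linarith)]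
    · rw [show s0 + ε/2 - s0 = ε/2 by ring, abs_of_pos (by linarith)]
  have t1 := abs_sub_le r0 u s0
  have t2 := abs_sub_le u v s0
  linarith

/-- In the sensor-dense regime in `ℝ¹`, a code is realizable by open convex sets iff it is
realizable by closed convex sets. -/
theorem dense_open_iff_closed (k : ℕ) (C : Finset (Fin k → Bool)) :
    (∃ U : Fin k → Set ℝ, (∀ i, IsOpen (U i)) ∧ (∀ i, Convex ℝ (U i)) ∧
      code U Set.univ = ↑C) ↔
    (∃ U : Fin k → Set ℝ, (∀ i, IsClosed (U i)) ∧ (∀ i, Convex ℝ (U i)) ∧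
      code U Set.univ = ↑C) := by
  constructor
  · rintro ⟨U, hop, hconv, hcode⟩
    choose a b hab using fun i => open_rep (hop i) (hconv i)
    obtain ⟨ε, hε, hgap⟩ := exists_eps a b
    refine ⟨fun i => {x : ℝ | a i + ↑ε ≤ ↑x ∧ ↑x ≤ b i - ↑ε}, fun i => ?_, fun i => ?_, ?_⟩
    · exact (isClosed_Icc (a := a i + ↑ε) (b := b i - ↑ε)).preimage continuous_coe_real_ereal
    · rw [convex_iff_ordConnected]
      refine ⟨fun x hx y hy z hz => ?_⟩
      exact ⟨hx.1.trans (EReal.coe_le_coe_iff.mpr hz.1),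
        (EReal.coe_le_coe_iff.mpr hz.2).trans hy.2⟩
    · have hU : U = fun i => {x : ℝ | a i < ↑x ∧ ↑x < b i} := funext hab
      rw [← core a b ε hε hgap, ← hU]
      exact hcode
  · rintro ⟨U, hcl, hconv, hcode⟩
    choose c d hcd using fun i => closed_rep (hcl i) (hconv i)
    obtain ⟨ε, hε, hgap⟩ := exists_eps c d
    have hextract : ∀ r : ℝ, Ept (fun i => c i - ↑(ε/2)) (fun i => d i + ↑(ε/2)) r →
        ∃ r0, Ept c d r0 ∧ (r = r0 - ε/2 ∨ r = r0 + ε/2) := by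
      intro r hr
      rcases hr with ⟨i, hi⟩ | ⟨i, hi⟩
      · refine ⟨r + ε/2, Or.inl ⟨i, ?_⟩, Or.inl (by ring)⟩
        change c i - ↑(ε/2) = (r:EReal) at hi
        rw [← er_sub_add (c i) (ε/2), hi]; norm_cast
      · refine ⟨r - ε/2, Or.inr ⟨i, ?_⟩, Or.inr (by ring)⟩
        change d i + ↑(ε/2) = (r:EReal) at hi
        rw [← er_add_sub (d i) (ε/2), hi]; norm_cast
    have hgap' : ∀ r s : ℝ, Ept (fun i => c i - ↑(ε/2)) (fun i => d i + ↑(ε/2)) r →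
        Ept (fun i => c i - ↑(ε/2)) (fun i => d i + ↑(ε/2)) s → r ≠ s → 2*(ε/2) ≤ |r - s| := by
      intro r s hr hs hrs
      obtain ⟨r0, hr0, hre⟩ := hextract r hr
      obtain ⟨s0, hs0, hse⟩ := hextract s hs
      by_cases h0 : r0 = s0
      · subst h0
        rcases hre with rfl | rfl <;> rcases hse with rfl | rfl
        · exact absurd rfl hrs
        · rw [show r0 - ε/2 - (r0 + ε/2) = -ε by ring, abs_neg, abs_of_pos hε]; linarith
        · rw [show r0 + ε/2 - (r0 - ε/2) = ε by ring, abs_of_pos hε]; linarith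
        · exact absurd rfl hrs
      · exact gapshift ε r0 s0 r s hε (hgap r0 s0 hr0 hs0 h0) hre hse
    have hcore := core (fun i => c i - ↑(ε/2)) (fun i => d i + ↑(ε/2)) (ε/2)
      (by linarith) hgap'
    refine ⟨fun i => {x : ℝ | c i - ↑(ε/2) < ↑x ∧ ↑x < d i + ↑(ε/2)}, fun i => ?_, fun i => ?_, ?_⟩
    · exact (isOpen_Ioo (a := c i - ↑(ε/2)) (b := d i + ↑(ε/2))).preimage
        continuous_coe_real_ereal
    · rw [convex_iff_ordConnected]
      refine ⟨fun x hx y hy z hz => ?_⟩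
      exact ⟨hx.1.trans_le (EReal.coe_le_coe_iff.mpr hz.1),
        (EReal.coe_le_coe_iff.mpr hz.2).trans_lt hy.2⟩
    · have hsimp : (fun i => {x : ℝ | (c i - ↑(ε/2)) + ↑(ε/2) ≤ (x:EReal) ∧
          (x:EReal) ≤ (d i + ↑(ε/2)) - ↑(ε/2)}) = U := by
        funext i
        rw [hcd i]
        ext x
        rw [mem_setOf_eq, mem_setOf_eq, er_sub_add, er_add_sub]
      rw [hcore, hsimp]
      exact hcode
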